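/- In a flat green Veldkamp quadrangle, two points a and b are opposite if and only if dist(a,b)=4. -/

import Mathlib

/-- A Veldkamp graph: a graph endowed, at each vertex `v`, with a symmetric
anti-reflexive "local opposition" relation `opp v` on the neighborhood of `v`
that is 2-plump. -/
structure VeldkampGraph (V : Type*) where
  adj : V → V → Prop
  adj_symm : ∀ u v, adj u v → adj v u
  adj_irrefl : ∀ v, ¬ adj v v
  opp : V → V → V → Prop
  opp_adj_left : ∀ v x y, opp v x y → adj v x
  opp_adj_right : ∀ v x y, opp v x y → adj v y
  opp_symm : ∀ v x y, opp v x y → opp v y x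
  opp_irrefl : ∀ v x, ¬ opp v x x
  plump2 : ∀ v x y, adj v x → adj v y → ∃ z, adj v z ∧ opp v z x ∧ opp v z y

namespace VeldkampGraph

variable {V : Type*} (Γ : VeldkampGraph V)

/-- `p 0, p 1, ..., p s` is an `s`-path. -/
def IsPath (s : ℕ) (p : ℕ → V) : Prop :=
  (∀ i, i < s → Γ.adj (p i) (p (i + 1))) ∧ ∀ i, i + 2 ≤ s → p i ≠ p (i + 2)

/-- `p 0, ..., p s` is a straight `s`-path. -/
def IsStraight (s : ℕ) (p : ℕ → V) : Prop :=
  Γ.IsPath s p ∧ ∀ i, i + 2 ≤ s → Γ.opp (p (i + 1)) (p i) (p (i + 2))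

/-- There is an `s`-path from `x` to `y`. -/
def HasPathLen (s : ℕ) (x y : V) : Prop :=
  ∃ p : ℕ → V, Γ.IsPath s p ∧ p 0 = x ∧ p s = y

/-- `dist (x, y) = k`. -/
def DistEq (x y : V) (k : ℕ) : Prop :=
  Γ.HasPathLen k x y ∧ ∀ j < k, ¬ Γ.HasPathLen j x y

def Connected : Prop := ∀ x y : V, ∃ s, Γ.HasPathLen s x y

def Bipartite : Prop := ∃ P : Set V, ∀ u v, Γ.adj u v → (u ∈ P ↔ v ∉ P)

/-- A straight `m`-circuit, encoded as an `m`-periodic straight closed walk. -/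
def IsClosedStraight (m : ℕ) (q : ℕ → V) : Prop :=
  (∀ i, Γ.adj (q i) (q (i + 1))) ∧ (∀ i, Γ.opp (q (i + 1)) (q i) (q (i + 2))) ∧
    ∀ i, q (i + m) = q i

/-- An `m`-circuit: an `m`-periodic closed walk through `m` distinct vertices. -/
def IsCircuit (m : ℕ) (q : ℕ → V) : Prop :=
  (∀ i, Γ.adj (q i) (q (i + 1))) ∧ (∀ i, q (i + m) = q i) ∧
    ∀ i j, i < m → j < m → q i = q j → i = j

end VeldkampGraph

/-- A Veldkamp `n`-gon. -/
structure VeldkampNGon (V : Type*) (n : ℕ) extends VeldkampGraph V where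
  two_le : 2 ≤ n
  connected : toVeldkampGraph.Connected
  bipartite : toVeldkampGraph.Bipartite
  vp2 : ∀ k, 1 ≤ k → k ≤ n - 1 → ∀ p j q, toVeldkampGraph.IsStraight k p →
    j ≤ k → toVeldkampGraph.IsStraight j q → q 0 = p 0 → q j = p k →
    j = k ∧ ∀ i ≤ k, q i = p i
  vp3 : ∀ p, toVeldkampGraph.IsStraight (n + 1) p →
    ∃ q, toVeldkampGraph.IsClosedStraight (2 * n) q ∧ ∀ i ≤ n + 1, q i = p i

namespace VeldkampNGon

variable {V : Type*} {n : ℕ} (Γ : VeldkampNGon V n)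

/-- Two vertices are opposite if there is a root (straight `n`-path) from one
to the other. -/
def Opp (x y : V) : Prop :=
  ∃ p, Γ.IsStraight n p ∧ p 0 = x ∧ p n = y

/-- The set of vertices opposite `x`. -/
def opSet (x : V) : Set V := {y | Γ.Opp x y}

/-- Two edges are opposite if some straight `(n+1)`-path has them as its first
and last edges. -/
def EdgeOpp (e f : Sym2 V) : Prop :=
  ∃ p, Γ.IsStraight (n + 1) p ∧ s(p 0, p 1) = e ∧ s(p n, p (n + 1)) = f

end VeldkampNGon

/-- A green Veldkamp quadrangle: a Veldkamp 4-gon with a bipartition into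
points `Pt` and lines (the complement), whose local opposition relations at
lines are trivial. -/
structure GreenVQ (V : Type*) extends VeldkampNGon V 4 where
  Pt : Set V
  part : ∀ u v, adj u v → (u ∈ Pt ↔ v ∉ Pt)
  green : ∀ x, x ∉ Pt → ∀ a b, adj x a → adj x b → a ≠ b → opp x a b

namespace GreenVQ

variable {V : Type*} (Γ : GreenVQ V)

/-- A weed: a non-straight 4-path `(a,x,b,y,c)` with `a,b,c` points and
`dist (a, c) = 4`. -/
def IsWeed (p : ℕ → V) : Prop :=
  Γ.IsPath 4 p ∧ ¬ Γ.IsStraight 4 p ∧ p 0 ∈ Γ.Pt ∧ p 2 ∈ Γ.Pt ∧ p 4 ∈ Γ.Pt ∧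
    Γ.DistEq (p 0) (p 4) 4

/-- `a ≃ b` for points: `a = b` or some weed begins at `a` and ends at `b`. -/
def PtSim (a b : V) : Prop :=
  a = b ∨ ∃ p, Γ.IsWeed p ∧ p 0 = a ∧ p 4 = b

/-- `x ~ y` for lines: some weed contains both `x` and `y`. -/
def LnSim (x y : V) : Prop :=
  ∃ p, Γ.IsWeed p ∧ ((p 1 = x ∧ p 3 = y) ∨ (p 1 = y ∧ p 3 = x))

/-- Flat: no two vertices have the same set of opposite vertices. -/
def Flat : Prop := ∀ x y : V, Γ.opSet x = Γ.opSet y → x = y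

end GreenVQ

/-!
Opposite points are joined by a root, a path of length 4. Odd lengths are excluded by parity,
and lengths 0 and 2 because a root can be rerouted through any edge at its origin while, by the
uniqueness of short straight paths, no root has a shortcut. Conversely, let `a x b y c` be a
4-path between points at distance 4. If it is straight at `b` it is a root, since local
opposition at lines is trivial. Otherwise, rerouting roots from `x` and from `y` through `b` shows
that a line is opposite `x` at `b` iff it is opposite `y` at `b`, so `x` and `y` have the same
opposite vertices, which flatness forbids.
-/
namespace VeldkampGraph

variable {V : Type*} {Γ : VeldkampGraph V} {u v w : V}

theorem adj.symm (h : Γ.adj u v) : Γ.adj v u := Γ.adj_symm u v h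

theorem opp.symm (h : Γ.opp v u w) : Γ.opp v w u := Γ.opp_symm v u w h

theorem opp.adj_left (h : Γ.opp v u w) : Γ.adj v u := Γ.opp_adj_left v u w h

theorem opp.adj_right (h : Γ.opp v u w) : Γ.adj v w := Γ.opp_adj_right v u w h

theorem opp.ne (h : Γ.opp v u w) : u ≠ w := fun e => Γ.opp_irrefl v w (e ▸ h)

variable (Γ) in
theorem isStraight_iff_of_two_le {s : ℕ} (hs : 2 ≤ s) {p : ℕ → V} :
    Γ.IsStraight s p ↔ ∀ i, i + 2 ≤ s → Γ.opp (p (i + 1)) (p i) (p (i + 2)) := by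
  refine ⟨fun h => h.2, fun h => ⟨⟨fun i hi => ?_, fun i hi => (h i hi).ne⟩, h⟩⟩
  by_cases hi' : i + 2 ≤ s
  · exact (h i hi').adj_left.symm
  · obtain ⟨j, rfl⟩ : ∃ j, i = j + 1 := ⟨i - 1, by omega⟩
    exact (h j (by omega)).adj_right

variable (Γ) in
/-- A straight 4-path written out vertex by vertex: adjacency and the absence of backtracking
are implied by the local oppositions. -/
structure IsRoot (v₀ v₁ v₂ v₃ v₄ : V) : Prop where
  opp₁ : Γ.opp v₁ v₀ v₂
  opp₂ : Γ.opp v₂ v₁ v₃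
  opp₃ : Γ.opp v₃ v₂ v₄

variable (Γ) in
theorem isStraight_four_iff {p : ℕ → V} :
    Γ.IsStraight 4 p ↔ Γ.IsRoot (p 0) (p 1) (p 2) (p 3) (p 4) := by
  rw [Γ.isStraight_iff_of_two_le (by norm_num)]
  refine ⟨fun h => ⟨h 0 (by norm_num), h 1 (by norm_num), h 2 (by norm_num)⟩, fun h i hi => ?_⟩
  obtain rfl | rfl | rfl : i = 0 ∨ i = 1 ∨ i = 2 := by omega
  exacts [h.opp₁, h.opp₂, h.opp₃]

theorem IsRoot.symm {v₀ v₁ v₂ v₃ v₄ : V} (h : Γ.IsRoot v₀ v₁ v₂ v₃ v₄) :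
    Γ.IsRoot v₄ v₃ v₂ v₁ v₀ :=
  ⟨h.opp₃.symm, h.opp₂.symm, h.opp₁.symm⟩

variable (Γ) in
theorem hasPathLen_two (huw : u ≠ w) (huv : Γ.adj u v) (hvw : Γ.adj v w) :
    Γ.HasPathLen 2 u w := by
  refine ⟨fun i => [u, v, w].getD i w, ⟨fun i hi => ?_, fun i hi => ?_⟩, rfl, rfl⟩
  · interval_cases i
    exacts [huv, hvw]
  · obtain rfl : i = 0 := by omega
    exact huw

theorem DistEq.not_adj_of_adj {k : ℕ} (h : Γ.DistEq u w k) (hk : 2 < k) (huv : Γ.adj u v) :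
    ¬ Γ.adj v w := by
  have huw : u ≠ w := by
    rintro rfl
    exact h.2 0 (by omega) ⟨fun _ => u, ⟨fun i hi => absurd hi i.not_lt_zero,
      fun i hi => absurd hi (by omega)⟩, rfl, rfl⟩
  exact fun hvw => h.2 2 hk (Γ.hasPathLen_two huw huv hvw)

end VeldkampGraph

namespace VeldkampGraph.IsRoot

variable {V : Type*} {Γ : VeldkampNGon V 4} {v₀ v₁ v₂ v₃ v₄ : V}

theorem not_adj (h : Γ.IsRoot v₀ v₁ v₂ v₃ v₄) : ¬ Γ.adj v₁ v₄ := by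
  intro h₁₄
  have hlong : Γ.IsStraight 3 (fun i => [v₁, v₂, v₃, v₄].getD i v₄) := by
    rw [Γ.isStraight_iff_of_two_le (by norm_num)]
    intro i hi
    obtain rfl | rfl : i = 0 ∨ i = 1 := by omega
    exacts [h.opp₂, h.opp₃]
  have hshort : Γ.IsStraight 1 (fun i => [v₁, v₄].getD i v₄) := by
    refine ⟨⟨fun i hi => ?_, fun i hi => by omega⟩, fun i hi => by omega⟩
    obtain rfl : i = 0 := by omega
    exact h₁₄
  have := (Γ.vp2 3 (by norm_num) (by norm_num) _ 1 _ hlong (by norm_num) hshort rfl rfl).1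
  omega

/-- The straight 5-path `v₀ … v₄ v₅` closes up into a straight 8-circuit, whose other half is
a root from `v₄` through `v₅` back to `v₀`. -/
theorem exists_isRoot_of_opp (h : Γ.IsRoot v₀ v₁ v₂ v₃ v₄) {v₅ : V} (h₅ : Γ.opp v₄ v₃ v₅) :
    ∃ w₂ w₃, Γ.IsRoot v₄ v₅ w₂ w₃ v₀ := by
  have hp : Γ.IsStraight 5 (fun i => [v₀, v₁, v₂, v₃, v₄, v₅].getD i v₅) := by
    rw [Γ.isStraight_iff_of_two_le (by norm_num)]
    intro i hi
    obtain rfl | rfl | rfl | rfl : i = 0 ∨ i = 1 ∨ i = 2 ∨ i = 3 := by omega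
    exacts [h.opp₁, h.opp₂, h.opp₃, h₅]
  obtain ⟨q, ⟨-, hq, hper⟩, hqp⟩ := Γ.vp3 _ hp
  have e₄ : q 4 = v₄ := hqp 4 (by norm_num)
  have e₅ : q 5 = v₅ := hqp 5 (by norm_num)
  have e₈ : q 8 = v₀ := (hper 0).trans (hqp 0 (by norm_num))
  refine ⟨q 6, q 7, ?_⟩
  rw [← e₄, ← e₅, ← e₈]
  exact ⟨hq 4, hq 5, hq 6⟩

end VeldkampGraph.IsRoot

namespace VeldkampNGon

variable {V : Type*} {Γ : VeldkampNGon V 4} {u w t : V}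

variable (Γ) in
theorem opp_iff_exists_isRoot : Γ.Opp u w ↔ ∃ v₁ v₂ v₃, Γ.IsRoot u v₁ v₂ v₃ w := by
  constructor
  · rintro ⟨p, hp, rfl, rfl⟩
    exact ⟨p 1, p 2, p 3, Γ.isStraight_four_iff.1 hp⟩
  · rintro ⟨v₁, v₂, v₃, h⟩
    exact ⟨fun i => [u, v₁, v₂, v₃, w].getD i w, Γ.isStraight_four_iff.2 h, rfl, rfl⟩

theorem Opp.symm (h : Γ.Opp u w) : Γ.Opp w u :=
  let ⟨v₁, v₂, v₃, hr⟩ := Γ.opp_iff_exists_isRoot.1 h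
  Γ.opp_iff_exists_isRoot.2 ⟨v₃, v₂, v₁, hr.symm⟩

/-- Replace the first edge twice by an edge opposite to it at `u` (2-plumpness), each time
closing up a straight 5-path. -/
theorem Opp.exists_isRoot (h : Γ.Opp u w) (ht : Γ.adj u t) :
    ∃ v₂ v₃, Γ.IsRoot u t v₂ v₃ w := by
  obtain ⟨v₁, v₂, v₃, hr⟩ := Γ.opp_iff_exists_isRoot.1 h
  obtain ⟨s, -, hsv₁, hst⟩ := Γ.plump2 u v₁ t hr.opp₁.adj_left.symm ht
  obtain ⟨w₂, w₃, hr'⟩ := hr.symm.exists_isRoot_of_opp hsv₁.symm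
  exact hr'.symm.exists_isRoot_of_opp hst

theorem Opp.not_adj (h : Γ.Opp u w) (ht : Γ.adj u t) : ¬ Γ.adj t w :=
  let ⟨_, _, hr⟩ := h.exists_isRoot ht
  hr.not_adj

theorem Opp.ne (h : Γ.Opp u w) : u ≠ w := by
  rintro rfl
  obtain ⟨_, _, _, hr⟩ := Γ.opp_iff_exists_isRoot.1 h
  exact hr.symm.not_adj hr.opp₃.adj_right

theorem eq_of_opp_of_opp {l l' : V} (h : Γ.opp l u w) (h' : Γ.opp l' u w) : l = l' := by
  have hpath : ∀ m, Γ.opp m u w → Γ.IsStraight 2 (fun i => [u, m, w].getD i w) := fun m hm => by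
    rw [Γ.isStraight_iff_of_two_le le_rfl]
    intro i hi
    obtain rfl : i = 0 := by omega
    exact hm
  exact ((Γ.vp2 2 (by norm_num) (by norm_num) _ 2 _ (hpath l h) le_rfl (hpath l' h') rfl rfl).2
    1 (by norm_num)).symm

theorem opSet_subset_opSet {b x y : V} (hbx : Γ.adj b x) (h : ∀ m, Γ.opp b x m → Γ.opp b y m) :
    Γ.opSet x ⊆ Γ.opSet y := fun _ hw =>
  let ⟨_, _, hr⟩ := Opp.exists_isRoot hw hbx.symm
  Γ.opp_iff_exists_isRoot.2 ⟨b, _, _, h _ hr.opp₁, hr.opp₂, hr.opp₃⟩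

end VeldkampNGon

namespace GreenVQ

open VeldkampNGon

variable {V : Type*} (Γ : GreenVQ V)

theorem not_mem_Pt_of_adj {u v : V} (h : Γ.adj u v) (hu : u ∈ Γ.Pt) : v ∉ Γ.Pt :=
  (Γ.part u v h).1 hu

theorem mem_Pt_of_adj {u v : V} (h : Γ.adj u v) (hu : u ∉ Γ.Pt) : v ∈ Γ.Pt :=
  not_not.1 fun hv => hu ((Γ.part u v h).2 hv)

theorem even_of_isPath {s : ℕ} {p : ℕ → V} (hp : Γ.IsPath s p) (h₀ : p 0 ∈ Γ.Pt)
    (hs : p s ∈ Γ.Pt) : Even s := by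
  have key : ∀ i ≤ s, (p i ∈ Γ.Pt ↔ Even i) := by
    intro i hi
    induction i with
    | zero => simpa using h₀
    | succ i ih =>
      have := Γ.part _ _ (hp.1 i (by omega))
      rw [Nat.even_add_one, ← ih (by omega)]
      tauto
  exact (key s le_rfl).1 hs

theorem isRoot_of_opp {v₀ v₁ v₂ v₃ v₄ : V} (h₀ : v₀ ∈ Γ.Pt) (h₀₁ : Γ.adj v₀ v₁)
    (h₃₄ : Γ.adj v₃ v₄) (h₀₂ : v₀ ≠ v₂) (h₂₄ : v₂ ≠ v₄) (h₂ : Γ.opp v₂ v₁ v₃) :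
    Γ.IsRoot v₀ v₁ v₂ v₃ v₄ := by
  have h₁ : v₁ ∉ Γ.Pt := Γ.not_mem_Pt_of_adj h₀₁ h₀
  have h₃ : v₃ ∉ Γ.Pt :=
    Γ.not_mem_Pt_of_adj h₂.adj_right (Γ.mem_Pt_of_adj h₂.adj_left.symm h₁)
  exact ⟨Γ.green v₁ h₁ _ _ h₀₁.symm h₂.adj_left.symm h₀₂, h₂,
    Γ.green v₃ h₃ _ _ h₂.adj_right.symm h₃₄ h₂₄⟩

theorem eq_of_adj_of_adj {u v l l' : V} (hu : u ∈ Γ.Pt) (huv : u ≠ v) (hul : Γ.adj u l)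
    (hvl : Γ.adj v l) (hul' : Γ.adj u l') (hvl' : Γ.adj v l') : l = l' :=
  eq_of_opp_of_opp (Γ.green l (Γ.not_mem_Pt_of_adj hul hu) u v hul.symm hvl.symm huv)
    (Γ.green l' (Γ.not_mem_Pt_of_adj hul' hu) u v hul'.symm hvl'.symm huv)

theorem not_opp_of_not_opp {a x b y c : V} (ha : a ∈ Γ.Pt) (hax : Γ.adj a x) (hxb : Γ.adj x b)
    (hby : Γ.adj b y) (hyc : Γ.adj y c) (hab : a ≠ b) (hxy : ¬ Γ.opp b x y) : ¬ Γ.Opp a c := by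
  intro hac
  obtain ⟨e, l, hr⟩ := hac.symm.exists_isRoot hyc.symm
  by_cases heb : e = b
  · subst heb
    have hlx : l = x := Γ.eq_of_adj_of_adj ha hab hr.opp₃.adj_right.symm hr.opp₂.adj_right
      hax hxb.symm
    exact hxy (hlx ▸ hr.opp₂).symm
  · have hb : b ∈ Γ.Pt := Γ.mem_Pt_of_adj hxb (Γ.not_mem_Pt_of_adj hax ha)
    have hba : Γ.Opp b a := Γ.opp_iff_exists_isRoot.2
      ⟨y, e, l, Γ.isRoot_of_opp hb hby hr.opp₃.adj_right (Ne.symm heb) hr.opp₃.ne hr.opp₂⟩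
    exact hba.not_adj hxb.symm hax.symm

theorem opp_or_exists_adj_adj {u w t c : V} (h : Γ.Opp u w) (hut : Γ.adj u t)
    (htc : Γ.adj t c) (hc : c ∈ Γ.Pt) : Γ.Opp c w ∨ ∃ k, Γ.adj c k ∧ Γ.adj w k := by
  obtain ⟨e, k, hr⟩ := h.exists_isRoot hut
  by_cases hec : e = c
  · subst hec
    exact Or.inr ⟨k, hr.opp₂.adj_right, hr.opp₃.adj_right.symm⟩
  · have ht : t ∉ Γ.Pt := Γ.not_mem_Pt_of_adj htc.symm hc
    exact Or.inl <| Γ.opp_iff_exists_isRoot.2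
      ⟨t, e, k, Γ.green t ht c e htc hr.opp₁.adj_right (Ne.symm hec), hr.opp₂, hr.opp₃⟩

theorem not_adj_of_not_opp {u w c t : V} (h : Γ.Opp u w) (hc : c ∈ Γ.Pt) (hcw : ¬ Γ.Opp c w)
    (hnc : ∀ k, Γ.adj c k → ¬ Γ.adj w k) (hut : Γ.adj u t) : ¬ Γ.adj c t := fun hct =>
  (Γ.opp_or_exists_adj_adj h hut hct.symm hc).elim hcw fun ⟨k, hck, hwk⟩ => hnc k hck hwk

/-- Of two points `ω₁ ≠ ω₂` of `w` other than `v`, join `ω₁` to `a` by a line `k`; the path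
`a k ω₁ w v` shows that `k` and `w` are opposite at `ω₁`, so `a k ω₁ w ω₂` is a root. -/
theorem exists_opp_of_forall_adj_adj {a v w : V} (ha : a ∈ Γ.Pt) (hav : Γ.Opp a v)
    (hvw : Γ.adj v w) (hcol : ∀ ω, Γ.adj w ω → ω ≠ v → ∃ k, Γ.adj a k ∧ Γ.adj ω k) :
    ∃ ω, Γ.adj w ω ∧ ω ≠ v ∧ Γ.Opp a ω := by
  obtain ⟨ω₁, hwω₁, hω₁v, -⟩ := Γ.plump2 w v v hvw.symm hvw.symm
  obtain ⟨ω₂, hwω₂, hω₂v, hω₂ω₁⟩ := Γ.plump2 w v ω₁ hvw.symm hω₁v.adj_left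
  obtain ⟨k, hak, hω₁k⟩ := hcol ω₁ hwω₁ hω₁v.ne
  have haω₁ : a ≠ ω₁ := by
    rintro rfl
    exact hav.not_adj hwω₁.symm hvw.symm
  have hkw : Γ.opp ω₁ k w := by
    by_contra hkw
    exact Γ.not_opp_of_not_opp ha hak hω₁k.symm hwω₁.symm hvw.symm haω₁ hkw hav
  exact ⟨ω₂, hwω₂, hω₂v.ne, Γ.opp_iff_exists_isRoot.2
    ⟨k, ω₁, w, Γ.isRoot_of_opp ha hak hwω₂ haω₁ hω₂ω₁.ne.symm hkw⟩⟩

/-- Choose a point `v ≠ b` on `m` and a line `w ≠ m` through `v`. If `y` and `m` were not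
opposite at `b`, every point `ω ≠ v` of `w` would be opposite `b` (via `b m v w ω`); rerouting
through `y` makes `ω` collinear with `c`, hence not opposite `a`, and rerouting through `x` makes
it collinear with `a`. This contradicts `exists_opp_of_forall_adj_adj` for `a` opposite `v`
(via `a x b m v`). -/
theorem opp_of_opp_of_not_opp {a x b y c m : V} (ha : a ∈ Γ.Pt) (hax : Γ.adj a x)
    (hxb : Γ.adj x b) (hby : Γ.adj b y) (hyc : Γ.adj y c) (hab : a ≠ b)
    (hac : ∀ k, Γ.adj c k → ¬ Γ.adj a k) (hxy : ¬ Γ.opp b x y) (hxm : Γ.opp b x m) :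
    Γ.opp b y m := by
  by_contra hym
  have hb : b ∈ Γ.Pt := Γ.mem_Pt_of_adj hxb (Γ.not_mem_Pt_of_adj hax ha)
  have hc : c ∈ Γ.Pt := Γ.mem_Pt_of_adj hyc (Γ.not_mem_Pt_of_adj hby hb)
  have hbm : Γ.adj b m := hxm.adj_right
  obtain ⟨v, hmv, hvb, -⟩ := Γ.plump2 m b b hbm.symm hbm.symm
  have hv : v ∈ Γ.Pt := Γ.mem_Pt_of_adj hmv (Γ.not_mem_Pt_of_adj hbm hb)
  have hnca : ¬ Γ.Opp c a := fun h => Γ.not_opp_of_not_opp ha hax hxb hby hyc hab hxy h.symm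
  have hav : Γ.Opp a v := Γ.opp_iff_exists_isRoot.2
    ⟨x, b, m, Γ.isRoot_of_opp ha hax hmv hab hvb.ne.symm hxm⟩
  have hnvc : ¬ Γ.Opp v c :=
    Γ.not_opp_of_not_opp hv hmv.symm hbm.symm hby hyc hvb.ne fun h => hym h.symm
  have hvc : ∀ k, Γ.adj v k → ¬ Γ.adj c k := fun k hvk =>
    Γ.not_adj_of_not_opp hav.symm hc hnca hac hvk
  obtain ⟨w, hvw, hwm, -⟩ := Γ.plump2 v m m hmv.symm hmv.symm
  have hbω : ∀ ω, Γ.adj w ω → ω ≠ v → Γ.Opp b ω := fun ω hwω hωv =>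
    Γ.opp_iff_exists_isRoot.2 ⟨m, v, w, Γ.isRoot_of_opp hb hbm hwω hvb.ne.symm hωv.symm hwm.symm⟩
  have hcω : ∀ ω, Γ.adj w ω → ω ≠ v → ∃ k, Γ.adj c k ∧ Γ.adj ω k := fun ω hwω hωv =>
    (Γ.opp_or_exists_adj_adj (hbω ω hwω hωv) hby hyc hc).resolve_left fun hcω =>
      Γ.not_adj_of_not_opp hcω.symm hv hnvc hvc hwω.symm hvw
  have haω : ∀ ω, Γ.adj w ω → ω ≠ v → ¬ Γ.Opp a ω := fun ω hwω hωv haω =>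
    let ⟨k, hck, hωk⟩ := hcω ω hwω hωv
    Γ.not_adj_of_not_opp haω.symm hc hnca hac hωk hck
  obtain ⟨ω, hwω, hωv, haω'⟩ := Γ.exists_opp_of_forall_adj_adj ha hav hvw fun ω hwω hωv =>
    (Γ.opp_or_exists_adj_adj (hbω ω hwω hωv) hxb.symm hax.symm ha).resolve_left (haω ω hwω hωv)
  exact haω ω hwω hωv haω'

theorem distEq_of_opp {a b : V} (ha : a ∈ Γ.Pt) (hb : b ∈ Γ.Pt) (h : Γ.Opp a b) :
    Γ.DistEq a b 4 := by
  refine ⟨?_, fun j hj hpath => ?_⟩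
  · obtain ⟨p, hp, hp₀, hp₄⟩ := h
    exact ⟨p, hp.1, hp₀, hp₄⟩
  obtain ⟨q, hq, rfl, rfl⟩ := hpath
  obtain rfl | rfl : j = 0 ∨ j = 2 := by
    obtain ⟨i, rfl⟩ := Γ.even_of_isPath hq ha hb
    omega
  · exact h.ne rfl
  · exact h.not_adj (hq.1 0 (by norm_num)) (hq.1 1 (by norm_num))

theorem opp_of_not_adj_adj (hflat : Γ.Flat) {a x b y c : V} (ha : a ∈ Γ.Pt) (hax : Γ.adj a x)
    (hxb : Γ.adj x b) (hby : Γ.adj b y) (hyc : Γ.adj y c) (hab : a ≠ b) (hbc : b ≠ c)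
    (hxy : x ≠ y) (hac : ∀ k, Γ.adj a k → ¬ Γ.adj c k) : Γ.Opp a c := by
  by_cases hbxy : Γ.opp b x y
  · exact Γ.opp_iff_exists_isRoot.2 ⟨x, b, y, Γ.isRoot_of_opp ha hax hyc hab hbc hbxy⟩
  have hc : c ∈ Γ.Pt :=
    Γ.mem_Pt_of_adj hyc (Γ.not_mem_Pt_of_adj hby (Γ.mem_Pt_of_adj hxb (Γ.not_mem_Pt_of_adj hax ha)))
  refine absurd (hflat x y (subset_antisymm ?_ ?_)) hxy
  · exact opSet_subset_opSet hxb.symm fun m =>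
      Γ.opp_of_opp_of_not_opp ha hax hxb hby hyc hab (fun k hck hak => hac k hak hck) hbxy
  · exact opSet_subset_opSet hby fun m =>
      Γ.opp_of_opp_of_not_opp hc hyc.symm hby.symm hxb.symm hax.symm hbc.symm hac
        fun h => hbxy h.symm

end GreenVQ

/-- In a flat green Veldkamp quadrangle, two points are opposite iff they are
at distance 4. -/
theorem stmt11 {V : Type*} (Γ : GreenVQ V) (hflat : Γ.Flat)
    (a b : V) (ha : a ∈ Γ.Pt) (hb : b ∈ Γ.Pt) :
    Γ.Opp a b ↔ Γ.DistEq a b 4 := by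
  refine ⟨Γ.distEq_of_opp ha hb, fun h => ?_⟩
  have hab : ∀ k, Γ.adj a k → ¬ Γ.adj b k := fun k hak hbk =>
    h.not_adj_of_adj (by norm_num) hak hbk.symm
  obtain ⟨⟨p, ⟨hadj, hne⟩, rfl, rfl⟩, -⟩ := h
  exact Γ.opp_of_not_adj_adj hflat ha (hadj 0 (by norm_num)) (hadj 1 (by norm_num))
    (hadj 2 (by norm_num)) (hadj 3 (by norm_num)) (hne 0 (by norm_num)) (hne 2 (by norm_num))
    (hne 1 (by norm_num)) hab
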